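/- The Hessian I₂' = u_{xx}u_{yy} − u_{xy}² and I_{2c} = u_x²u_{yy} − 2u_xu_yu_{xy} + u_y²u_{xx} are both invariant under the prolonged action of the special affine algebra sl(2,ℝ)⋉ℝ² on functions on ℝ²: the second prolongations of x∂_y, y∂_x, x∂_x − y∂_y, ∂_x, ∂_y all annihilate I₂' and I_{2c}. -/

import Mathlib

open Matrix

noncomputable section

/-- Coordinates on `J²ℝ²`: `(x, y, u, u_x, u_y, u_xx, u_xy, u_yy)`. -/
def I2' : (Fin 8 → ℝ) → ℝ := fun p => p 5 * p 7 - (p 6) ^ 2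

def I2c : (Fin 8 → ℝ) → ℝ := fun p =>
  (p 3) ^ 2 * p 7 - 2 * p 3 * p 4 * p 6 + (p 4) ^ 2 * p 5

/-- Second prolongation of `X₁ = x∂_y`. -/
def X1prol2 : (Fin 8 → ℝ) → (Fin 8 → ℝ) := fun p =>
  ![0, p 0, 0, -(p 4), 0, -2 * p 6, -(p 7), 0]

/-- Second prolongation of `X₂ = y∂_x`. -/
def X2prol2 : (Fin 8 → ℝ) → (Fin 8 → ℝ) := fun p =>
  ![p 1, 0, 0, 0, -(p 3), 0, -(p 5), -2 * p 6]

/-- Second prolongation of `X₃ = x∂_x − y∂_y`. -/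
def X3prol2 : (Fin 8 → ℝ) → (Fin 8 → ℝ) := fun p =>
  ![p 0, -(p 1), 0, -(p 3), p 4, -2 * p 5, 0, 2 * p 7]

/-- Second prolongation of `∂_x`. -/
def X4prol2 : (Fin 8 → ℝ) → (Fin 8 → ℝ) := fun _ => ![1, 0, 0, 0, 0, 0, 0, 0]

/-- Second prolongation of `∂_y`. -/
def X5prol2 : (Fin 8 → ℝ) → (Fin 8 → ℝ) := fun _ => ![0, 1, 0, 0, 0, 0, 0, 0]

theorem fderiv_eval {𝕜 ι : Type*} [NontriviallyNormedField 𝕜] [Fintype ι] (p : ι → 𝕜)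
    (i : ι) :
    fderiv 𝕜 (fun q : ι → 𝕜 => q i) p = ContinuousLinearMap.proj i :=
  (hasFDerivAt_apply i p).fderiv

theorem fderiv_I2'_apply (p v : Fin 8 → ℝ) :
    fderiv ℝ I2' p v = p 7 * v 5 + p 5 * v 7 - 2 * p 6 * v 6 := by
  unfold I2'
  simp (disch := fun_prop) only [fderiv_fun_sub, fderiv_fun_mul, fderiv_fun_pow, fderiv_eval,
    _root_.add_apply, _root_.sub_apply, _root_.smul_apply, ContinuousLinearMap.proj_apply,
    smul_eq_mul]
  ring

theorem fderiv_I2c_apply (p v : Fin 8 → ℝ) :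
    fderiv ℝ I2c p v = 2 * p 3 * p 7 * v 3 + p 3 ^ 2 * v 7
      - 2 * (p 4 * p 6 * v 3 + p 3 * p 6 * v 4 + p 3 * p 4 * v 6)
      + 2 * p 4 * p 5 * v 4 + p 4 ^ 2 * v 5 := by
  unfold I2c
  simp (disch := fun_prop) only [fderiv_fun_sub, fderiv_fun_add, fderiv_fun_mul, fderiv_fun_pow,
    fderiv_fun_const, fderiv_eval, _root_.add_apply, _root_.sub_apply, _root_.smul_apply,
    _root_.zero_apply, ContinuousLinearMap.proj_apply, Pi.zero_apply, smul_eq_mul]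
  ring

theorem stmt_15 : ∀ p : Fin 8 → ℝ,
    (fderiv ℝ I2' p (X1prol2 p) = 0 ∧ fderiv ℝ I2c p (X1prol2 p) = 0) ∧
    (fderiv ℝ I2' p (X2prol2 p) = 0 ∧ fderiv ℝ I2c p (X2prol2 p) = 0) ∧
    (fderiv ℝ I2' p (X3prol2 p) = 0 ∧ fderiv ℝ I2c p (X3prol2 p) = 0) ∧
    (fderiv ℝ I2' p (X4prol2 p) = 0 ∧ fderiv ℝ I2c p (X4prol2 p) = 0) ∧
    (fderiv ℝ I2' p (X5prol2 p) = 0 ∧ fderiv ℝ I2c p (X5prol2 p) = 0) := by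
  intro p
  refine ⟨⟨?_, ?_⟩, ⟨?_, ?_⟩, ⟨?_, ?_⟩, ⟨?_, ?_⟩, ⟨?_, ?_⟩⟩ <;>
    simp only [fderiv_I2'_apply, fderiv_I2c_apply, X1prol2, X2prol2, X3prol2, X4prol2, X5prol2,
      Matrix.cons_val] <;>
    ring
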